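/- If E is an FP-injective right R-module and N is a Ding injective right R-module, then Ext^i_R(E, N) = 0 for every i ≥ 1. -/

import Mathlib

/-! Preamble: basic notions of relative homological algebra over a
(possibly noncommutative) ring.  Right `R`-modules are modeled as
(left) modules over the opposite ring `Rᵐᵒᵖ`. -/

open CategoryTheory Opposite

noncomputable section

/-- The Ext group `Ext^n(A, B)` in the category of left `S`-modules,
computed as a derived functor (of `ℤ`-modules). -/
def extGroup (S : Type) [Ring S] (n : ℕ) (A B : ModuleCat.{0} S) : Type :=
  ((_root_.Ext ℤ (ModuleCat.{0} S) n).obj (op A)).obj B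

/-- Vanishing of the Ext group `Ext^n(A, B)`. -/
def extVanish (S : Type) [Ring S] (n : ℕ) (A B : ModuleCat.{0} S) : Prop :=
  Subsingleton (extGroup S n A B)

/-- A module `E` is FP-injective if `Ext¹(F, E) = 0` for every finitely
presented module `F`. -/
def FPInjective (S : Type) [Ring S] (E : ModuleCat.{0} S) : Prop :=
  ∀ F : ModuleCat.{0} S, Module.FinitePresentation S F → extVanish S 1 F E

/-- `E` satisfies the Ext-criterion for FP-injective dimension `≤ n`:
`Ext^{n+1}(F, E) = 0` for every finitely presented `F`. -/
def fpInjDimLE (S : Type) [Ring S] (E : ModuleCat.{0} S) (n : ℕ) : Prop :=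
  ∀ F : ModuleCat.{0} S, Module.FinitePresentation S F → extVanish S (n + 1) F E

/-- `E` has FP-injective dimension exactly `n` : `n` is the least natural number
with `Ext^{n+1}(F, E) = 0` for all finitely presented `F`. -/
def fpInjDimEq (S : Type) [Ring S] (E : ModuleCat.{0} S) (n : ℕ) : Prop :=
  fpInjDimLE S E n ∧ ∀ m : ℕ, fpInjDimLE S E m → n ≤ m

/-- `E` has finite FP-injective dimension. -/
def fpInjDimFinite (S : Type) [Ring S] (E : ModuleCat.{0} S) : Prop :=
  ∃ n : ℕ, fpInjDimLE S E n

/-- A ring `S` is left coherent if every finitely generated left ideal is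
finitely presented (as a left `S`-module). -/
def LeftCoherent (S : Type) [Ring S] : Prop :=
  ∀ I : Submodule S S, I.FG → Module.FinitePresentation S I

/-- A ring `S` is right coherent if its opposite ring is left coherent. -/
def RightCoherent (S : Type) [Ring S] : Prop :=
  LeftCoherent Sᵐᵒᵖ

section BTensor

variable (R : Type) [Ring R]

/-- The subgroup of `A ⊗_ℤ B` by which one quotients to obtain the balanced
tensor product `A ⊗_R B` of a right `R`-module `A` and a left `R`-module `B`. -/
def btRel (A : Type) [AddCommGroup A] [Module Rᵐᵒᵖ A]
    (B : Type) [AddCommGroup B] [Module R B] :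
    Submodule ℤ (TensorProduct ℤ A B) :=
  Submodule.span ℤ
    {x | ∃ (a : A) (r : R) (b : B),
      x = (MulOpposite.op r • a) ⊗ₜ[ℤ] b - a ⊗ₜ[ℤ] (r • b)}

/-- The balanced tensor product `A ⊗_R B` of a right `R`-module `A` and a left
`R`-module `B`, defined as a quotient of `A ⊗_ℤ B`. -/
abbrev BTensor (A : Type) [AddCommGroup A] [Module Rᵐᵒᵖ A]
    (B : Type) [AddCommGroup B] [Module R B] : Type :=
  TensorProduct ℤ A B ⧸ btRel R A B

variable {A A' : Type} [AddCommGroup A] [Module Rᵐᵒᵖ A] [AddCommGroup A'] [Module Rᵐᵒᵖ A']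
variable {B B' : Type} [AddCommGroup B] [Module R B] [AddCommGroup B'] [Module R B']

/-- The map `A ⊗_R B → A ⊗_R B'` induced by a map `f : B → B'` of left
`R`-modules. -/
def BTensor.lmap (f : B →ₗ[R] B') (A : Type) [AddCommGroup A] [Module Rᵐᵒᵖ A] :
    BTensor R A B →ₗ[ℤ] BTensor R A B' :=
  Submodule.mapQ (btRel R A B) (btRel R A B')
    (TensorProduct.map LinearMap.id f.toAddMonoidHom.toIntLinearMap)
    (by
      rw [btRel, Submodule.span_le]
      rintro x ⟨a, r, b, rfl⟩
      simp only [SetLike.mem_coe, Submodule.mem_comap, map_sub, TensorProduct.map_tmul,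
        LinearMap.id_apply, AddMonoidHom.coe_toIntLinearMap, LinearMap.toAddMonoidHom_coe,
        map_smul]
      exact Submodule.subset_span ⟨a, r, f b, by first | (erw [map_sub, TensorProduct.map_tmul, TensorProduct.map_tmul]; simp) | (erw [map_sub, TensorProduct.map_tmul, TensorProduct.map_tmul]; rfl) | (erw [map_sub, TensorProduct.map_tmul, TensorProduct.map_tmul]; simp only [LinearMap.id_apply, AddMonoidHom.coe_toIntLinearMap, LinearMap.toAddMonoidHom_coe, map_smul])⟩)

/-- The map `A ⊗_R B → A' ⊗_R B` induced by a map `g : A → A'` of right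
`R`-modules. -/
def BTensor.rmap (g : A →ₗ[Rᵐᵒᵖ] A') (B : Type) [AddCommGroup B] [Module R B] :
    BTensor R A B →ₗ[ℤ] BTensor R A' B :=
  Submodule.mapQ (btRel R A B) (btRel R A' B)
    (TensorProduct.map g.toAddMonoidHom.toIntLinearMap LinearMap.id)
    (by
      rw [btRel, Submodule.span_le]
      rintro x ⟨a, r, b, rfl⟩
      simp only [SetLike.mem_coe, Submodule.mem_comap, map_sub, TensorProduct.map_tmul,
        LinearMap.id_apply, AddMonoidHom.coe_toIntLinearMap, LinearMap.toAddMonoidHom_coe,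
        map_smul]
      exact Submodule.subset_span ⟨g a, r, b, by first | (erw [map_sub, TensorProduct.map_tmul, TensorProduct.map_tmul]; simp) | (erw [map_sub, TensorProduct.map_tmul, TensorProduct.map_tmul]; rfl) | (erw [map_sub, TensorProduct.map_tmul, TensorProduct.map_tmul]; simp only [LinearMap.id_apply, AddMonoidHom.coe_toIntLinearMap, LinearMap.toAddMonoidHom_coe, map_smul])⟩)

/-- A right `R`-module `A` is flat if the functor `A ⊗_R —` preserves
injectivity of maps of left `R`-modules. -/
def FlatRight (A : ModuleCat.{0} Rᵐᵒᵖ) : Prop :=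
  ∀ (B B' : ModuleCat.{0} R) (f : B →ₗ[R] B'),
    Function.Injective f → Function.Injective (BTensor.lmap R f A)

/-- A left `R`-module `B` is flat if the functor `— ⊗_R B` preserves
injectivity of maps of right `R`-modules. -/
def FlatLeft (B : ModuleCat.{0} R) : Prop :=
  ∀ (A A' : ModuleCat.{0} Rᵐᵒᵖ) (g : A →ₗ[Rᵐᵒᵖ] A'),
    Function.Injective g → Function.Injective (BTensor.rmap R g B)

end BTensor

/-- A module `N` is Ding injective if there is a doubly infinite exact sequence
of injective modules, with `N` as one of the kernels, which stays exact after
applying `Hom(E, —)` for every FP-injective module `E`. -/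
def DingInjective (S : Type) [Ring S] (N : ModuleCat.{0} S) : Prop :=
  ∃ (I : ℤ → ModuleCat.{0} S) (d : ∀ n : ℤ, I n →ₗ[S] I (n + 1)),
    (∀ n, Module.Injective S (I n)) ∧
    (∀ n, Function.Exact (d n) (d (n + 1))) ∧
    Nonempty (N ≃ₗ[S] LinearMap.ker (d 0)) ∧
    (∀ E : ModuleCat.{0} S, FPInjective S E → ∀ n : ℤ,
      Function.Exact (fun g : E →ₗ[S] I n => (d n).comp g)
        (fun g : E →ₗ[S] I (n + 1) => (d (n + 1)).comp g))

/-- A right `R`-module `M` is Ding projective if there is a doubly infinite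
exact sequence of projective right modules, with `M` as one of the kernels,
which stays exact after applying `Hom(—, F)` for every flat right module `F`. -/
def DingProjective (R : Type) [Ring R] (M : ModuleCat.{0} Rᵐᵒᵖ) : Prop :=
  ∃ (P : ℤ → ModuleCat.{0} Rᵐᵒᵖ) (d : ∀ n : ℤ, P n →ₗ[Rᵐᵒᵖ] P (n + 1)),
    (∀ n, Module.Projective Rᵐᵒᵖ (P n)) ∧
    (∀ n, Function.Exact (d n) (d (n + 1))) ∧
    Nonempty (M ≃ₗ[Rᵐᵒᵖ] LinearMap.ker (d 0)) ∧
    (∀ F : ModuleCat.{0} Rᵐᵒᵖ, FlatRight R F → ∀ n : ℤ,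
      Function.Exact (fun g : P (n + 1 + 1) →ₗ[Rᵐᵒᵖ] F => g.comp (d (n + 1)))
        (fun g : P (n + 1) →ₗ[Rᵐᵒᵖ] F => g.comp (d n)))

/-- A right `R`-module `M` is Ding flat if there is a doubly infinite exact
sequence of flat right modules, with `M` as one of the kernels, which stays
exact after applying `— ⊗_R E` for every FP-injective left module `E`. -/
def DingFlat (R : Type) [Ring R] (M : ModuleCat.{0} Rᵐᵒᵖ) : Prop :=
  ∃ (F : ℤ → ModuleCat.{0} Rᵐᵒᵖ) (d : ∀ n : ℤ, F n →ₗ[Rᵐᵒᵖ] F (n + 1)),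
    (∀ n, FlatRight R (F n)) ∧
    (∀ n, Function.Exact (d n) (d (n + 1))) ∧
    Nonempty (M ≃ₗ[Rᵐᵒᵖ] LinearMap.ker (d 0)) ∧
    (∀ E : ModuleCat.{0} R, FPInjective R E → ∀ n : ℤ,
      Function.Exact (BTensor.rmap R (d n) E) (BTensor.rmap R (d (n + 1)) E))

/-- A left `R`-module `M` is Gorenstein flat if there is a doubly infinite
exact sequence of flat left modules, with `M` as one of the kernels, which
stays exact after applying `E ⊗_R —` for every injective right module `E`. -/
def GorensteinFlat (R : Type) [Ring R] (M : ModuleCat.{0} R) : Prop :=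
  ∃ (F : ℤ → ModuleCat.{0} R) (d : ∀ n : ℤ, F n →ₗ[R] F (n + 1)),
    (∀ n, FlatLeft R (F n)) ∧
    (∀ n, Function.Exact (d n) (d (n + 1))) ∧
    Nonempty (M ≃ₗ[R] LinearMap.ker (d 0)) ∧
    (∀ E : ModuleCat.{0} Rᵐᵒᵖ, Module.Injective Rᵐᵒᵖ E → ∀ n : ℤ,
      Function.Exact (BTensor.lmap R (d n) E) (BTensor.lmap R (d (n + 1)) E))

/-- A right `R`-module `M` has flat dimension `≤ n` : there is an exact
resolution `0 → F_n → ⋯ → F_0 → M → 0` by flat right modules (encoded as an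
`ℕ`-indexed resolution which vanishes beyond degree `n`). -/
def flatDimLE (R : Type) [Ring R] (M : ModuleCat.{0} Rᵐᵒᵖ) (n : ℕ) : Prop :=
  ∃ (F : ℕ → ModuleCat.{0} Rᵐᵒᵖ) (d : ∀ k : ℕ, F (k + 1) →ₗ[Rᵐᵒᵖ] F k)
    (ε : F 0 →ₗ[Rᵐᵒᵖ] M),
    (∀ k, FlatRight R (F k)) ∧
    Function.Surjective ε ∧
    Function.Exact (d 0) ε ∧
    (∀ k, Function.Exact (d (k + 1)) (d k)) ∧
    (∀ k, n < k → Subsingleton (F k))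

/-- A right `R`-module has finite flat dimension. -/
def flatDimFinite (R : Type) [Ring R] (M : ModuleCat.{0} Rᵐᵒᵖ) : Prop :=
  ∃ n : ℕ, flatDimLE R M n

/-- A ring `R` is an `n`-FC ring if it is left and right coherent and has left
and right self FP-injective dimension equal to `n`. -/
def IsFCRing (R : Type) [Ring R] (n : ℕ) : Prop :=
  LeftCoherent R ∧ RightCoherent R ∧
    fpInjDimEq R (ModuleCat.of R R) n ∧
    fpInjDimEq Rᵐᵒᵖ (ModuleCat.of Rᵐᵒᵖ Rᵐᵒᵖ) n

/-- A ring is Ding-Chen if it is an `n`-FC ring for some `n`. -/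
def IsDingChen (R : Type) [Ring R] : Prop :=
  ∃ n : ℕ, IsFCRing R n

end

/-!
Take a projective resolution `P → E` and a complete injective resolution `I` of `N = ker d⁰`.
A cocycle `P_{n+1} → N` is shown to be a coboundary by chasing through the double complex
`Hom(P_•, I^•)`: injectivity of the `I^j` extends maps along the differentials of `P`, and
the columns `Hom(P_k, I^•)` are exact because `P_k` is projective, while `Hom(E, I^•)` is
exact because `E` is FP-injective and `N` is Ding injective.
-/

open CategoryTheory

universe u

section LinearAlgebra

variable {S : Type*} [Ring S] {M N P Q : Type*} [AddCommGroup M] [Module S M]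
  [AddCommGroup N] [Module S N] [AddCommGroup P] [Module S P] [AddCommGroup Q] [Module S Q]

theorem LinearMap.exists_comp_eq_of_surjective (g : N →ₗ[S] P) (hg : Function.Surjective g)
    (φ : N →ₗ[S] Q) (h : LinearMap.ker g ≤ LinearMap.ker φ) :
    ∃ ψ : P →ₗ[S] Q, ψ ∘ₗ g = φ :=
  ⟨(LinearMap.ker g).liftQ φ h ∘ₗ (g.quotKerEquivOfSurjective hg).symm.toLinearMap, by
    ext x
    simp⟩

theorem Module.Injective.exists_comp_eq {Y Z : Type u} [AddCommGroup Y] [Module S Y]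
    [AddCommGroup Z] [Module S Z] [Module.Injective S Z]
    (g : N →ₗ[S] Y) (φ : N →ₗ[S] Z) (h : LinearMap.ker g ≤ LinearMap.ker φ) :
    ∃ ψ : Y →ₗ[S] Z, ψ ∘ₗ g = φ := by
  obtain ⟨φ', hφ'⟩ := g.rangeRestrict.exists_comp_eq_of_surjective g.surjective_rangeRestrict φ
    (by rwa [LinearMap.ker_rangeRestrict])
  obtain ⟨ψ, hψ⟩ := Module.Injective.out (LinearMap.range g).subtype
    (Submodule.injective_subtype _) φ'
  exact ⟨ψ, by ext x; exact (hψ _).trans (LinearMap.congr_fun hφ' x)⟩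

theorem Function.Exact.ker_le_ker_of_comp_eq_zero {f : M →ₗ[S] N} {g : N →ₗ[S] P}
    (hfg : Function.Exact f g) {φ : N →ₗ[S] Q} (hφ : φ ∘ₗ f = 0) :
    LinearMap.ker g ≤ LinearMap.ker φ :=
  hfg.linearMap_ker_eq ▸ LinearMap.range_le_ker_iff.mpr hφ

theorem Function.Exact.postcomp_of_projective (X : Type*) [AddCommGroup X] [Module S X]
    [Module.Projective S X] {f : M →ₗ[S] N} {g : N →ₗ[S] P} (hfg : Function.Exact f g) :
    Function.Exact (fun u : X →ₗ[S] M => f ∘ₗ u) (fun u : X →ₗ[S] N => g ∘ₗ u) := by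
  intro u
  refine ⟨fun hu => ?_, ?_⟩
  · have hrange : ∀ x, u x ∈ LinearMap.range f := fun x =>
      (hfg (u x)).mp (LinearMap.congr_fun hu x)
    obtain ⟨v, hv⟩ := Module.projective_lifting_property f.rangeRestrict
      (u.codRestrict _ hrange) f.surjective_rangeRestrict
    exact ⟨v, by ext x; exact congrArg Subtype.val (LinearMap.congr_fun hv x)⟩
  · rintro ⟨v, rfl⟩
    change g ∘ₗ f ∘ₗ v = 0
    rw [← LinearMap.comp_assoc, hfg.linearMap_comp_eq_zero, LinearMap.zero_comp]

end LinearAlgebra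

section DoubleComplex

variable {S : Type} [Ring S] {Q : ℕ → ModuleCat.{0} S} (q : ∀ k, Q (k + 1) →ₗ[S] Q k)
  {I : ℤ → ModuleCat.{0} S} (d : ∀ j, I j →ₗ[S] I (j + 1))

/-- In the double complex `Hom(Q_•, I^•)` with exact rows `Q` (augmented by a surjection)
and exact columns `Hom(Q_k, I^•)`, every cocycle `Q_{k+1} → ker d_j` is a coboundary. -/
theorem exists_comp_eq_of_comp_eq_zero (hq : ∀ k, Function.Exact (q (k + 1)) (q k))
    (hq₀ : Function.Surjective (q 0)) (hI : ∀ j, Module.Injective S (I j))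
    (hd : ∀ j, d (j + 1) ∘ₗ d j = 0)
    (hHom : ∀ k j, Function.Exact (fun u : Q k →ₗ[S] I j => d j ∘ₗ u)
      (fun u : Q k →ₗ[S] I (j + 1) => d (j + 1) ∘ₗ u))
    (k : ℕ) (j : ℤ) (f : Q (k + 1) →ₗ[S] I j) (hdf : d j ∘ₗ f = 0) (hfq : f ∘ₗ q (k + 1) = 0) :
    ∃ g : Q k →ₗ[S] I j, d j ∘ₗ g = 0 ∧ g ∘ₗ q k = f := by
  induction k generalizing j with
  | zero =>
    obtain ⟨g, rfl⟩ := (q 0).exists_comp_eq_of_surjective hq₀ f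
      ((hq 0).ker_le_ker_of_comp_eq_zero hfq)
    refine ⟨g, ?_, rfl⟩
    rwa [← LinearMap.cancel_right hq₀, LinearMap.zero_comp]
  | succ k ih =>
    obtain ⟨G, rfl⟩ := (hI j).exists_comp_eq (q (k + 1)) f
      ((hq (k + 1)).ker_le_ker_of_comp_eq_zero hfq)
    obtain ⟨g', hdg', hg'⟩ := ih (j + 1) (d j ∘ₗ G)
      (by rw [← LinearMap.comp_assoc, hd, LinearMap.zero_comp])
      (by rw [LinearMap.comp_assoc, hdf])
    obtain ⟨h, rfl⟩ := (hHom k j g').mp hdg'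
    refine ⟨G - h ∘ₗ q k, ?_, ?_⟩
    · rw [LinearMap.comp_sub, ← hg', LinearMap.comp_assoc, sub_self]
    · rw [LinearMap.sub_comp, LinearMap.comp_assoc, (hq k).linearMap_comp_eq_zero,
        LinearMap.comp_zero, sub_zero]

end DoubleComplex

namespace CategoryTheory.ProjectiveResolution

variable {S : Type} [Ring S] {E : ModuleCat.{0} S} (P : ProjectiveResolution E)

-- `E` sits in degree `0` and `P_k` in degree `k + 1`.
noncomputable abbrev augmented : ChainComplex (ModuleCat.{0} S) ℕ :=
  P.complex.augment (P.π.f 0) P.complex_d_comp_π_f_zero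

theorem exact_augmented :
    ∀ k, Function.Exact (P.augmented.d (k + 2) (k + 1)).hom (P.augmented.d (k + 1) k).hom
  | 0 => (ShortComplex.ShortExact.moduleCat_exact_iff_function_exact _).mp P.exact₀
  | k + 1 => (ShortComplex.ShortExact.moduleCat_exact_iff_function_exact _).mp (P.exact_succ k)

theorem surjective_augmented_d_one_zero : Function.Surjective (P.augmented.d 1 0).hom :=
  (ModuleCat.epi_iff_surjective _).mp (inferInstanceAs (Epi (P.π.f 0)))

theorem extVanish_succ_of_forall_exists_comp_eq (N : ModuleCat.{0} S) (n : ℕ)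
    (h : ∀ f : P.complex.X (n + 1) →ₗ[S] N, f ∘ₗ (P.complex.d (n + 2) (n + 1)).hom = 0 →
      ∃ g : P.complex.X n →ₗ[S] N, g ∘ₗ (P.complex.d (n + 1) n).hom = f) :
    extVanish S (n + 1) E N := by
  rw [extVanish, extGroup, ← ModuleCat.isZero_iff_subsingleton]
  refine Limits.IsZero.of_iso ?_ (P.isoExt (n + 1) N)
  rw [← HomologicalComplex.exactAt_iff_isZero_homology,
    HomologicalComplex.exactAt_iff' _ n (n + 1) (n + 2) (by simp) (by simp),
    ShortComplex.moduleCat_exact_iff]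
  intro f hf
  obtain ⟨g, hg⟩ := h f.hom (congrArg ModuleCat.Hom.hom hf)
  exact ⟨ModuleCat.ofHom g, ModuleCat.hom_ext hg⟩

end CategoryTheory.ProjectiveResolution

/-- If `E` is FP-injective and `N` is Ding injective, then
`Ext^i(E, N) = 0` for all `i ≥ 1`. -/
theorem statement2 (R : Type) [Ring R] (E N : ModuleCat.{0} Rᵐᵒᵖ)
    (hE : FPInjective Rᵐᵒᵖ E) (hN : DingInjective Rᵐᵒᵖ N) :
    ∀ i : ℕ, 1 ≤ i → extVanish Rᵐᵒᵖ i E N := by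
  obtain ⟨I, d, hI, hd, ⟨e⟩, hding⟩ := hN
  intro i hi
  obtain ⟨n, rfl⟩ := Nat.exists_eq_add_of_le' hi
  let P := ProjectiveResolution.of E
  have hHom : ∀ k j, Function.Exact (fun u : P.augmented.X k →ₗ[Rᵐᵒᵖ] I j => d j ∘ₗ u)
      (fun u : P.augmented.X k →ₗ[Rᵐᵒᵖ] I (j + 1) => d (j + 1) ∘ₗ u)
    | 0, j => hding E hE j
    | k + 1, j => (hd j).postcomp_of_projective (P.complex.X k)
  let ι : N →ₗ[Rᵐᵒᵖ] I 0 := (LinearMap.ker (d 0)).subtype ∘ₗ e.toLinearMap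
  refine P.extVanish_succ_of_forall_exists_comp_eq N n fun f hf => ?_
  obtain ⟨g, hdg, hg⟩ := exists_comp_eq_of_comp_eq_zero (fun k => (P.augmented.d (k + 1) k).hom)
    d P.exact_augmented P.surjective_augmented_d_one_zero hI
    (fun j => (hd j).linearMap_comp_eq_zero) hHom (n + 1) 0
    (ι ∘ₗ f) (by ext x; exact (e (f x)).2)
    (by
      change ι ∘ₗ f ∘ₗ (P.complex.d (n + 2) (n + 1)).hom = 0
      rw [hf, LinearMap.comp_zero])
  refine ⟨e.symm.toLinearMap ∘ₗ g.codRestrict _ fun x => LinearMap.congr_fun hdg x, ?_⟩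
  ext x
  exact e.symm_apply_eq.mpr (Subtype.ext (LinearMap.congr_fun hg x))
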